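/- Intertwining of X-ray transforms via the projective equivalence: fix γ > −1. For every continuous function f : ℂ → ℝ on the closed unit disk and all β, a ∈ ℝ, ∫_ℝ x(γ_{β,a}(t))^{2+2γ} · f(Φ(γ_{β,a}(t))) dt = μ_h(a) · ∫_{−μ_h(a)}^{μ_h(a)} (μ_h(a)² − u²)^γ · f( e^{i(β+arctan a+π)}·(u + i·a·μ_h(a)) ) du. In operator form, I₀^H x^{2+2γ} ∘ Φ* = μ_h · Ψ* ∘ I₀^E d^γ, where I₀^H is the hyperbolic X-ray transform, I₀^E d^γ is the Euclidean X-ray transform with weight d(z)^γ = (1−|z|²)^γ in fan-beam coordinates, and Ψ(β,a) = (β, arctan a). -/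

import Mathlib

open MeasureTheory

noncomputable section

/-- `x̂(t) = tanh(t/2)`. -/
def xhat (t : ℝ) : ℝ := Real.tanh (t / 2)

/-- Horocyclic parameterization of hyperbolic geodesics in the Poincaré disk. -/
def γH (β a t : ℝ) : ℂ :=
  Complex.exp (Complex.I * (β : ℂ)) *
    (((2 + Complex.I * (a : ℂ)) * (xhat t : ℂ) + Complex.I * (a : ℂ)) /
      (Complex.I * (a : ℂ) * (xhat t : ℂ) - 2 + Complex.I * (a : ℂ)))

/-- The distinguished boundary defining function `x(z) = (1−|z|²)/(1+|z|²)`. -/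
def xb (z : ℂ) : ℝ := (1 - ‖z‖ ^ 2) / (1 + ‖z‖ ^ 2)

/-- `μ_h(a) = (1+a²)^{−1/2}`. -/
def μh (a : ℝ) : ℝ := (1 + a ^ 2) ^ (-(1 : ℝ) / 2)

/-- The projective map `Φ(z) = 2z/(1+|z|²)`. -/
def Φm (z : ℂ) : ℂ := 2 * z / (((1 + ‖z‖ ^ 2 : ℝ)) : ℂ)

/-! Put `w = eᵗ (1 + i a)`. Then `γ_{β,a}(t) = -e^{iβ} (w - 1) / (w̄ + 1)`, and for points of this
shape `x = 2 Re w / (1 + |w|²)` and `Φ = -e^{iβ} (w² - 1) / (1 + |w|²)`. In polar form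
`w = exp (s + iα)` with `α = arctan a`, `s = t + log √(1 + a²)`, these become `x = cos α / cosh s`
and `Φ = e^{i(β+α+π)} (cos α · tanh s + i sin α)`: the hyperbolic geodesic is carried onto the
Euclidean chord `(β, α)`, traversed with parameter `u = μ tanh s`, `μ = μ_h(a) = cos α`. The
substitution `u = μ tanh s`, with `du = μ / cosh² s ds` and `μ² - u² = (μ / cosh s)²`, then turns
the Euclidean integral into the hyperbolic one. -/

open Complex ComplexConjugate

theorem Real.tanh_eq_exp_two_mul (x : ℝ) :
    Real.tanh x = (Real.exp (2 * x) - 1) / (Real.exp (2 * x) + 1) := by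
  rw [Real.tanh_eq, two_mul, Real.exp_add, Real.exp_neg]
  field_simp

theorem Real.hasDerivAt_tanh (x : ℝ) : HasDerivAt Real.tanh (Real.cosh x ^ 2)⁻¹ x := by
  have h := (Real.hasDerivAt_sinh x).div (Real.hasDerivAt_cosh x) (Real.cosh_pos x).ne'
  rw [← sq, ← sq, Real.cosh_sq_sub_sinh_sq, one_div] at h
  rwa [show Real.tanh = fun y => Real.sinh y / Real.cosh y from funext Real.tanh_eq_sinh_div_cosh]

theorem sq_sub_sq_mul_tanh (r s : ℝ) : r ^ 2 - (r * Real.tanh s) ^ 2 = (r / Real.cosh s) ^ 2 := by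
  have hcosh := (Real.cosh_pos s).ne'
  rw [Real.tanh_eq_sinh_div_cosh]
  field_simp
  linear_combination r ^ 2 * Real.cosh_sq_sub_sinh_sq s

theorem integral_Ioo_eq_integral_tanh {E : Type*} [NormedAddCommGroup E] [NormedSpace ℝ E]
    {r : ℝ} (hr : 0 < r) (g : ℝ → E) :
    ∫ u in Set.Ioo (-r) r, g u = ∫ s, (r / Real.cosh s ^ 2) • g (r * Real.tanh s) := by
  have himage : (fun s => r * Real.tanh s) '' Set.univ = Set.Ioo (-r) r := by
    rw [← Set.image_image (r * ·), Real.tanh_bijOn.image_eq, Set.image_mul_left_Ioo hr]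
    simp
  have hderiv (s : ℝ) : HasDerivAt (fun s => r * Real.tanh s) (r / Real.cosh s ^ 2) s := by
    simpa only [div_eq_mul_inv] using (Real.hasDerivAt_tanh s).const_mul r
  rw [← himage, integral_image_eq_integral_abs_deriv_smul MeasurableSet.univ
    (fun s _ => (hderiv s).hasDerivWithinAt)
    ((mul_right_injective₀ hr.ne').comp Real.tanh_injective).injOn g, Measure.restrict_univ]
  simp only [abs_of_pos (div_pos hr (pow_pos (Real.cosh_pos _) 2))]

section MulDivConjAddOne

variable {ζ w : ℂ}

theorem conj_add_one_ne_zero (hw : w ≠ -1) : conj w + 1 ≠ 0 := by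
  rwa [← map_one (starRingEnd ℂ), ← map_add, map_ne_zero, ← sub_neg_eq_add, sub_ne_zero]

theorem norm_mul_div_conj_add_one (hζ : ‖ζ‖ = 1) :
    ‖ζ * (w - 1) / (conj w + 1)‖ = ‖w - 1‖ / ‖w + 1‖ := by
  have hconj : conj w + 1 = conj (w + 1) := by rw [map_add, map_one]
  rw [norm_div, norm_mul, hζ, one_mul, hconj, norm_conj]

theorem ofReal_sq_norm_mul_div (hζ : ‖ζ‖ = 1) :
    ((‖ζ * (w - 1) / (conj w + 1)‖ ^ 2 : ℝ) : ℂ) =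
      (w - 1) * (conj w - 1) / ((w + 1) * (conj w + 1)) := by
  rw [norm_mul_div_conj_add_one hζ, div_pow, ofReal_div, ofReal_pow, ofReal_pow, ← mul_conj',
    ← mul_conj']
  simp

theorem add_one_mul_add_sub_one_mul (w : ℂ) :
    (w + 1) * (conj w + 1) + (w - 1) * (conj w - 1) = 2 * ((1 + ‖w‖ ^ 2 : ℝ) : ℂ) := by
  push_cast
  rw [← mul_conj']
  ring

theorem xb_mul_div (hζ : ‖ζ‖ = 1) (hw : w ≠ -1) :
    xb (ζ * (w - 1) / (conj w + 1)) = 2 * w.re / (1 + ‖w‖ ^ 2) := by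
  apply ofReal_injective
  have hN : (w + 1) * (conj w + 1) ≠ 0 :=
    mul_ne_zero (by rwa [← sub_neg_eq_add, sub_ne_zero]) (conj_add_one_ne_zero hw)
  have hw' : ((1 + ‖w‖ ^ 2 : ℝ) : ℂ) ≠ 0 := by exact_mod_cast (by positivity : 1 + ‖w‖ ^ 2 ≠ 0)
  rw [xb, ofReal_div, ofReal_sub, ofReal_add, ofReal_one, ofReal_sq_norm_mul_div hζ,
    one_sub_div hN, one_add_div hN, div_div_div_cancel_right₀ hN, add_one_mul_add_sub_one_mul,
    ofReal_div, ofReal_mul, ofReal_ofNat, re_eq_add_conj]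
  field_simp
  ring

theorem Φm_mul_div (hζ : ‖ζ‖ = 1) (hw : w ≠ -1) :
    Φm (ζ * (w - 1) / (conj w + 1)) = ζ * (w ^ 2 - 1) / ((1 + ‖w‖ ^ 2 : ℝ) : ℂ) := by
  have h1 := conj_add_one_ne_zero hw
  have h2 : w + 1 ≠ 0 := by rwa [← sub_neg_eq_add, sub_ne_zero]
  have hw' : ((1 + ‖w‖ ^ 2 : ℝ) : ℂ) ≠ 0 := by exact_mod_cast (by positivity : 1 + ‖w‖ ^ 2 ≠ 0)
  rw [Φm, ofReal_add, ofReal_one, ofReal_sq_norm_mul_div hζ, one_add_div (mul_ne_zero h2 h1),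
    add_one_mul_add_sub_one_mul]
  field_simp
  ring

end MulDivConjAddOne

section ExpAddMulI

variable (s α : ℝ)

theorem re_exp_add_mul_I : (exp (s + α * I)).re = Real.exp s * Real.cos α := by
  rw [exp_add, ← ofReal_exp, re_ofReal_mul, exp_ofReal_mul_I_re]

theorem norm_exp_add_mul_I : ‖exp (s + α * I)‖ = Real.exp s := by
  rw [exp_add, norm_mul, norm_exp_ofReal, norm_exp_ofReal_mul_I, mul_one]

theorem exp_add_mul_I_ne_neg_one {s α : ℝ} (hα : 0 < Real.cos α) : exp (s + α * I) ≠ -1 := by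
  intro h
  have hre := re_exp_add_mul_I s α
  rw [h, neg_re, one_re] at hre
  nlinarith [Real.exp_pos s]

theorem two_mul_re_exp_div :
    2 * (exp (s + α * I)).re / (1 + ‖exp (s + α * I)‖ ^ 2) = Real.cos α / Real.cosh s := by
  rw [re_exp_add_mul_I, norm_exp_add_mul_I, Real.cosh_eq, Real.exp_neg]
  field_simp
  ring

theorem exp_sq_sub_one_div :
    (exp (s + α * I) ^ 2 - 1) / ((1 + ‖exp (s + α * I)‖ ^ 2 : ℝ) : ℂ) =
      exp (α * I) * ((Real.cos α * Real.tanh s : ℝ) + Real.sin α * I) := by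
  have hE : 1 + exp (s : ℂ) ^ 2 ≠ 0 := by
    exact_mod_cast (by positivity : 1 + Real.exp s ^ 2 ≠ 0)
  have hsc := sin_sq_add_cos_sq (α : ℂ)
  rw [norm_exp_add_mul_I, exp_add, exp_mul_I, Real.tanh_eq_exp_two_mul, two_mul, Real.exp_add]
  push_cast
  generalize exp (s : ℂ) = E at *
  generalize cos (α : ℂ) = c at *
  generalize sin (α : ℂ) = σ at *
  have hE' : E ^ 2 + 1 ≠ 0 := by rwa [add_comm]
  field_simp
  linear_combination (1 + E ^ 2) * (hsc - σ ^ 2 * I_sq)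

end ExpAddMulI

theorem μh_eq_cos_arctan (a : ℝ) : μh a = Real.cos (Real.arctan a) := by
  rw [μh, Real.cos_arctan, Real.sqrt_eq_rpow, one_div, ← Real.rpow_neg (by positivity)]
  norm_num

theorem mul_μh_eq_sin_arctan (a : ℝ) : a * μh a = Real.sin (Real.arctan a) := by
  rw [μh_eq_cos_arctan, Real.cos_arctan, Real.sin_arctan, mul_one_div]

theorem xhat_eq (t : ℝ) : xhat t = (Real.exp t - 1) / (Real.exp t + 1) := by
  rw [xhat, Real.tanh_eq_exp_two_mul, mul_div_cancel₀ t two_ne_zero]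

theorem ofReal_exp_mul_one_add_mul_I (t a : ℝ) :
    (Real.exp t : ℂ) * (1 + a * I) =
      exp ((t + Real.log √(1 + a ^ 2) : ℝ) + Real.arctan a * I) := by
  have hk : 0 < √(1 + a ^ 2) := by positivity
  have hk' : (√(1 + a ^ 2) : ℂ) ≠ 0 := by exact_mod_cast hk.ne'
  rw [exp_add, ← ofReal_exp, Real.exp_add, Real.exp_log hk, exp_mul_I, ← ofReal_cos, ← ofReal_sin,
    Real.cos_arctan, Real.sin_arctan]
  push_cast
  field_simp

theorem γH_eq_mul_div (β a t : ℝ) :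
    γH β a t = -exp (I * β) * ((Real.exp t : ℂ) * (1 + a * I) - 1) /
      (conj ((Real.exp t : ℂ) * (1 + a * I)) + 1) := by
  have hx : (xhat t : ℂ) * (Real.exp t + 1) = Real.exp t - 1 := by
    have : xhat t * (Real.exp t + 1) = Real.exp t - 1 := by rw [xhat_eq]; field_simp
    exact_mod_cast this
  have hD : I * a * xhat t - 2 + I * a ≠ 0 := by
    intro h; simpa using congrArg re h
  have hQ := conj_add_one_ne_zero
    (ofReal_exp_mul_one_add_mul_I t a ▸ exp_add_mul_I_ne_neg_one (Real.cos_arctan_pos a))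
  rw [γH, neg_mul, neg_div, mul_div_assoc, ← mul_neg, ← neg_div]
  congr 1
  rw [div_eq_div_iff hD hQ]
  simp only [map_mul, map_add, map_one, conj_ofReal, conj_I]
  linear_combination 2 * hx

theorem γH_eq_mul_div_exp (β a t : ℝ) :
    γH β a t = -exp (I * β) * (exp ((t + Real.log √(1 + a ^ 2) : ℝ) + Real.arctan a * I) - 1) /
      (conj (exp ((t + Real.log √(1 + a ^ 2) : ℝ) + Real.arctan a * I)) + 1) := by
  rw [γH_eq_mul_div, ofReal_exp_mul_one_add_mul_I]

theorem xb_γH (β a t : ℝ) : xb (γH β a t) = μh a / Real.cosh (t + Real.log √(1 + a ^ 2)) := by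
  rw [γH_eq_mul_div_exp, xb_mul_div (by rw [norm_neg, norm_exp_I_mul_ofReal])
    (exp_add_mul_I_ne_neg_one (Real.cos_arctan_pos a)), two_mul_re_exp_div, μh_eq_cos_arctan]

theorem Φm_γH (β a t : ℝ) :
    Φm (γH β a t) = exp (I * ((β + Real.arctan a + Real.pi : ℝ) : ℂ)) *
      (((μh a * Real.tanh (t + Real.log √(1 + a ^ 2)) : ℝ) : ℂ) + I * a * μh a) := by
  rw [γH_eq_mul_div_exp, Φm_mul_div (by rw [norm_neg, norm_exp_I_mul_ofReal])
    (exp_add_mul_I_ne_neg_one (Real.cos_arctan_pos a)), mul_div_assoc, exp_sq_sub_one_div,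
    ← μh_eq_cos_arctan, ← mul_μh_eq_sin_arctan]
  push_cast
  rw [mul_add I, mul_add I, exp_add, exp_add, mul_comm I (Real.pi : ℂ), exp_pi_mul_I]
  ring_nf

theorem xray_intertwining_general (γ : ℝ) (f : ℂ → ℝ) (β a : ℝ) :
    (∫ t : ℝ, xb (γH β a t) ^ (2 + 2 * γ) * f (Φm (γH β a t))) =
      μh a * ∫ u in (-(μh a))..(μh a),
        ((μh a) ^ 2 - u ^ 2) ^ γ *
          f (Complex.exp (Complex.I * ((β + Real.arctan a + Real.pi : ℝ) : ℂ)) *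
            ((u : ℂ) + Complex.I * (a : ℂ) * ((μh a : ℝ) : ℂ))) := by
  have hμ : 0 < μh a := μh_eq_cos_arctan a ▸ Real.cos_arctan_pos a
  rw [intervalIntegral.integral_of_le (neg_le_self hμ.le), integral_Ioc_eq_integral_Ioo,
    integral_Ioo_eq_integral_tanh hμ, ← integral_const_mul]
  conv_rhs => rw [← integral_add_right_eq_self _ (Real.log √(1 + a ^ 2))]
  congr 1
  funext t
  have hp : 0 < μh a / Real.cosh (t + Real.log √(1 + a ^ 2)) := div_pos hμ (Real.cosh_pos _)
  rw [xb_γH, Φm_γH, sq_sub_sq_mul_tanh, smul_eq_mul, Real.rpow_add hp, Real.rpow_mul hp.le,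
    Real.rpow_two]
  ring

/-- Intertwining of X-ray transforms via the projective equivalence
(`I₀^H x^{2+2γ} ∘ Φ* = μ_h · Ψ* ∘ I₀^E d^γ`): for `γ > −1`, continuous `f` and all `β, a`,
`∫_ℝ x(γ_{β,a}(t))^{2+2γ} f(Φ(γ_{β,a}(t))) dt
 = μ_h(a) ∫_{−μ_h(a)}^{μ_h(a)} (μ_h(a)² − u²)^γ f(e^{i(β+arctan a+π)}(u + i·a·μ_h(a))) du`. -/
theorem xray_intertwining (γ : ℝ) (hγ : -1 < γ) (f : ℂ → ℝ) (hf : Continuous f) (β a : ℝ) :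
    (∫ t : ℝ, xb (γH β a t) ^ (2 + 2 * γ) * f (Φm (γH β a t))) =
      μh a * ∫ u in (-(μh a))..(μh a),
        ((μh a) ^ 2 - u ^ 2) ^ γ *
          f (Complex.exp (Complex.I * ((β + Real.arctan a + Real.pi : ℝ) : ℂ)) *
            ((u : ℂ) + Complex.I * (a : ℂ) * ((μh a : ℝ) : ℂ))) :=
  xray_intertwining_general γ f β a
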